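/- Let ξ : ℝ → ℝ and let ξ̄ : ℝ → ℝ be Lipschitz continuous, nondecreasing, bounded from below, convex, and equal to ξ on [0,1]. Then for every μ ∈ C satisfying 0 ≤ μ ≤ 1 almost everywhere, 𝖧(μ) = ∫₀¹ ξ( μ(s) ) ds. -/

import Mathlib

open MeasureTheory

/-- Lebesgue measure restricted to `[0,1)`. -/
noncomputable def mu0 : Measure ℝ := volume.restrict (Set.Ico (0 : ℝ) 1)

/-- The Hilbert space `H = L²([0,1))`. -/
noncomputable abbrev Hsp : Type := Lp ℝ 2 mu0

/-- The cone `C ⊂ H` of (classes of) functions with a nondecreasing nonnegative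
representative on `[0,1)`. -/
def coneC : Set Hsp :=
  {f | ∃ g : ℝ → ℝ, MonotoneOn g (Set.Ico 0 1) ∧ (∀ x ∈ Set.Ico (0 : ℝ) 1, 0 ≤ g x) ∧
    (f : ℝ → ℝ) =ᵐ[mu0] g}

/-- The dual cone `C*` of `C` in `H`. -/
noncomputable def dualC : Set Hsp := {ι | ∀ ρ ∈ coneC, 0 ≤ inner (𝕜 := ℝ) ι ρ}

/-- The regularized nonlinearity `𝖧(ι) = inf { ∫₀¹ ξ̄(ν(s)) ds : ν ∈ C, ν - ι ∈ C* }`,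
valued in `ℝ ∪ {+∞}` (the infimum of the empty set being `+∞`). -/
noncomputable def HH (ξb : ℝ → ℝ) (ι : Hsp) : EReal :=
  sInf {x : EReal | ∃ ν ∈ coneC, ν - ι ∈ dualC ∧ x = ((∫ s, ξb (ν s) ∂mu0 : ℝ) : EReal)}

/-
The left derivative `ρ := ξ̄'₋ ∘ μ` is a subgradient of `ν ↦ ∫ ξ̄ ∘ ν` at `μ`, and it lies in `C`:
`ξ̄'₋` is nondecreasing by convexity, nonnegative since `ξ̄` is nondecreasing, and bounded by the
Lipschitz constant, so it maps the nondecreasing representative of `μ` to one of `ρ`. Hence every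
admissible `ν` satisfies `∫ ξ̄ ∘ ν ≥ ∫ ξ̄ ∘ μ + ⟪ν - μ, ρ⟫ ≥ ∫ ξ̄ ∘ μ`, while `ν = μ` is admissible
because `0 ∈ C*`. Finally `ξ̄ = ξ` on the range `[0, 1]` of `μ`.
-/

open Set

namespace ConvexOn

variable {f : ℝ → ℝ}

theorem add_leftDeriv_mul_sub_le (hf : ConvexOn ℝ univ f) (a b : ℝ) :
    f a + derivWithin f (Iio a) a * (b - a) ≤ f b := by
  have ha : a ∈ interior univ := by simp
  rcases lt_trichotomy b a with hba | rfl | hab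
  · have := hf.slope_le_leftDeriv_of_mem_interior trivial ha hba
    rw [slope_def_field, div_le_iff₀ (by linarith)] at this
    linarith
  · simp
  · have := (hf.leftDeriv_le_rightDeriv_of_mem_interior ha).trans
      (hf.rightDeriv_le_slope_of_mem_interior ha trivial hab)
    rw [slope_def_field, le_div_iff₀ (by linarith)] at this
    linarith

theorem leftDeriv_le_of_lipschitzWith (hf : ConvexOn ℝ univ f) {K : NNReal}
    (hlip : LipschitzWith K f) (a : ℝ) : derivWithin f (Iio a) a ≤ K := by
  have hsub := hf.add_leftDeriv_mul_sub_le a (a + 1)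
  have hK := (hlip.dist_le_mul (a + 1) a)
  rw [Real.dist_eq, Real.dist_eq, add_sub_cancel_left, abs_one, mul_one] at hK
  linarith [le_abs_self (f (a + 1) - f a)]

end ConvexOn

theorem LipschitzWith.integrable_comp {α E F : Type*} [MeasurableSpace α] {μ : Measure α}
    [IsFiniteMeasure μ] [NormedAddCommGroup E] [NormedAddCommGroup F] {g : E → F} {K : NNReal}
    (hg : LipschitzWith K g) {f : α → E} (hf : Integrable f μ) :
    Integrable (fun x => g (f x)) μ := by
  refine ((integrable_const ‖g 0‖).add (hf.norm.const_mul K)).mono'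
    (hg.continuous.comp_aestronglyMeasurable hf.1) (.of_forall fun x => ?_)
  have := hg.norm_sub_le (f x) 0
  rw [sub_zero] at this
  simp only [Pi.add_apply]
  linarith [norm_sub_norm_le (g (f x)) (g 0)]

instance : IsFiniteMeasure mu0 := by
  rw [mu0]
  infer_instance

theorem integrable_coeFn_Hsp (f : Hsp) : Integrable f mu0 :=
  (Lp.memLp f).integrable (by norm_num)

theorem exists_mem_coneC_ae_eq_comp {d : ℝ → ℝ} (hd : Monotone d) (hd0 : ∀ x, 0 ≤ d x)
    {C : ℝ} (hdC : ∀ x, d x ≤ C) {μ : Hsp} (hμ : μ ∈ coneC) :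
    ∃ ρ ∈ coneC, ρ =ᵐ[mu0] fun s => d (μ s) := by
  obtain ⟨g, hg, -, hμg⟩ := hμ
  have hmem : MemLp (fun s => d (μ s)) 2 mu0 :=
    MemLp.of_bound (hd.measurable.comp_aemeasurable (Lp.aestronglyMeasurable μ).aemeasurable
      ).aestronglyMeasurable C (.of_forall fun s => by
        rw [Real.norm_eq_abs, abs_of_nonneg (hd0 _)]; exact hdC _)
  refine ⟨hmem.toLp _, ⟨d ∘ g, hd.comp_monotoneOn hg, fun x _ => hd0 _, ?_⟩, hmem.coeFn_toLp⟩
  filter_upwards [hmem.coeFn_toLp, hμg] with s h1 h2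
  rw [h1, h2, Function.comp_apply]

theorem integral_comp_le_of_sub_mem_dualC {f : ℝ → ℝ} (hf : ConvexOn ℝ univ f)
    (hmono : Monotone f) {K : NNReal} (hlip : LipschitzWith K f) {μ ν : Hsp} (hμ : μ ∈ coneC)
    (hνμ : ν - μ ∈ dualC) : ∫ s, f (μ s) ∂mu0 ≤ ∫ s, f (ν s) ∂mu0 := by
  obtain ⟨ρ, hρ, hρμ⟩ := exists_mem_coneC_ae_eq_comp
    (fun a b hab => hf.monotoneOn_leftDeriv (by simp) (by simp) hab)
    (fun x => (hmono.monotoneOn _).derivWithin_nonneg) (hf.leftDeriv_le_of_lipschitzWith hlip) hμ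
  have hfμ := hlip.integrable_comp (integrable_coeFn_Hsp μ)
  have hinner_int := L2.integrable_inner (𝕜 := ℝ) (ν - μ) ρ
  have hinner : 0 ≤ ∫ s, inner ℝ ((ν - μ) s) (ρ s) ∂mu0 := by
    simpa only [L2.inner_def] using hνμ ρ hρ
  calc ∫ s, f (μ s) ∂mu0
      ≤ ∫ s, f (μ s) ∂mu0 + ∫ s, inner ℝ ((ν - μ) s) (ρ s) ∂mu0 := le_add_of_nonneg_right hinner
    _ = ∫ s, f (μ s) + inner ℝ ((ν - μ) s) (ρ s) ∂mu0 := (integral_add hfμ hinner_int).symm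
    _ ≤ ∫ s, f (ν s) ∂mu0 := by
        refine integral_mono_ae (hfμ.add hinner_int)
          (hlip.integrable_comp (integrable_coeFn_Hsp ν)) ?_
        filter_upwards [Lp.coeFn_sub ν μ, hρμ] with s hsub hρs
        rw [hsub, hρs, Pi.sub_apply, RCLike.inner_apply', conj_trivial, mul_comm]
        exact hf.add_leftDeriv_mul_sub_le (μ s) (ν s)

theorem HH_eq_integral_of_mem_coneC {f : ℝ → ℝ} (hf : ConvexOn ℝ univ f)
    (hmono : Monotone f) {K : NNReal} (hlip : LipschitzWith K f) {μ : Hsp} (hμ : μ ∈ coneC) :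
    HH f μ = ((∫ s, f (μ s) ∂mu0 : ℝ) : EReal) := by
  refine le_antisymm (sInf_le ⟨μ, hμ, fun ρ _ => by simp, rfl⟩) (le_sInf ?_)
  rintro _ ⟨ν, -, hνμ, rfl⟩
  exact EReal.coe_le_coe (integral_comp_le_of_sub_mem_dualC hf hmono hlip hμ hνμ)

theorem stmt11_general (ξ ξb : ℝ → ℝ) (hlip : ∃ K : NNReal, LipschitzWith K ξb)
    (hmono : Monotone ξb)
    (hconv : ConvexOn ℝ Set.univ ξb)
    (heq : ∀ r ∈ Set.Icc (0 : ℝ) 1, ξb r = ξ r)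
    (μ : Hsp) (hμ : μ ∈ coneC)
    (hrange : ∀ᵐ s ∂mu0, μ s ∈ Set.Icc (0 : ℝ) 1) :
    HH ξb μ = ((∫ s, ξ (μ s) ∂mu0 : ℝ) : EReal) := by
  obtain ⟨K, hlipK⟩ := hlip
  rw [HH_eq_integral_of_mem_coneC hconv hmono hlipK hμ,
    integral_congr_ae (hrange.mono fun s hs => heq _ hs)]

theorem stmt11 (ξ ξb : ℝ → ℝ) (hlip : ∃ K : NNReal, LipschitzWith K ξb)
    (hmono : Monotone ξb) (hbdd : ∃ c : ℝ, ∀ r : ℝ, c ≤ ξb r)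
    (hconv : ConvexOn ℝ Set.univ ξb)
    (heq : ∀ r ∈ Set.Icc (0 : ℝ) 1, ξb r = ξ r)
    (μ : Hsp) (hμ : μ ∈ coneC)
    (hrange : ∀ᵐ s ∂mu0, μ s ∈ Set.Icc (0 : ℝ) 1) :
    HH ξb μ = ((∫ s, ξ (μ s) ∂mu0 : ℝ) : EReal) :=
  stmt11_general ξ ξb hlip hmono hconv heq μ hμ hrange
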